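/- The vectors e₁, …, e₈ span a copy of E₈(−2) inside L: the 8×8 Gram matrix M with M i j = B(eᵢ, eⱼ) has all entries even integers, and the integer matrix M' = −(1/2)·M is symmetric, positive definite, has all diagonal entries even, and has determinant 1 (so that the ℤ-span of e₁,…,e₈ with the form (1/2)·B is an even negative definite unimodular lattice of rank 8, i.e. E₈(−1)). -/

import Mathlib

noncomputable section

abbrev V : Type := Fin 4 → Fin 4 → ℚ

/-- The `A₄` Cartan matrix. -/
def CartanA4 : Matrix (Fin 4) (Fin 4) ℤ :=
  Matrix.of fun i k =>
    if i = k then 2 else if i.val + 1 = k.val ∨ k.val + 1 = i.val then -1 else 0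

/-- The bilinear form of the lattice `A₄(-2)^{⊕ 4}` on `V`. -/
def B (x y : V) : ℚ :=
  -2 * ∑ j : Fin 4, ∑ i : Fin 4, ∑ k : Fin 4, x j i * (CartanA4 i k : ℚ) * y j k

/-- The standard basis vector `a_{j,i}` (the `i`-th simple root of the `j`-th copy of `A₄`). -/
def a (j i : Fin 4) : V := fun j' i' => if j' = j ∧ i' = i then 1 else 0

/-- The subgroup `N ⊆ V` of integer-valued vectors, i.e. the lattice `A₄(-2)^{⊕ 4}`. -/
def N : AddSubgroup V :=
  AddSubgroup.pi Set.univ fun _ => AddSubgroup.pi Set.univ fun _ => (Int.castAddHom ℚ).range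

/-- The map acting as `γ : α₁ ↦ α₂ ↦ α₃ ↦ α₄ ↦ -(α₁+α₂+α₃+α₄)` on each copy of `A₄`. -/
def g (x : V) : V := fun j => ![-(x j 3), x j 0 - x j 3, x j 1 - x j 3, x j 2 - x j 3]

def μ : V := (1/2 : ℚ) • (a 0 0 + a 1 0 + a 2 0 + a 3 0)

def ν : V := (1/2 : ℚ) • (a 1 0 + a 2 2 + a 2 3 + a 3 0 + a 3 2 + a 3 3)

/-- The overlattice `L` generated by `N` and the vectors `gⁱ(μ)`, `gⁱ(ν)`, `i = 0,1,2,3`. -/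
def L : AddSubgroup V :=
  N ⊔ AddSubgroup.closure {x : V | ∃ i : Fin 4, x = g^[(i : ℕ)] μ ∨ x = g^[(i : ℕ)] ν}

def e : Fin 8 → V :=
  ![μ, g^[2] μ + g^[3] μ, ν, μ + g^[2] μ + g^[3] μ - g^[2] ν - g^[3] ν,
    a 0 0, a 0 2 + a 0 3, a 1 0, a 1 2 + a 1 3]

def f : Fin 8 → V := fun i => g (e i)

/-- The involution `h`, acting on each copy of `A₄` by `a₁ ↦ -a₁`, `a₂ ↦ a₁+a₂+a₃+a₄`,
`a₃ ↦ -a₄`, `a₄ ↦ -a₃`. -/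
def h (x : V) : V := fun j => ![x j 1 - x j 0, x j 1, x j 1 - x j 3, x j 1 - x j 2]



def E8M : Matrix (Fin 8) (Fin 8) ℤ :=
  !![2,0,1,1,1,0,1,0; 0,2,1,2,0,1,0,1; 1,1,2,2,0,0,1,0; 1,2,2,4,1,1,1,0;
     1,0,0,1,2,0,0,0; 0,1,0,1,0,2,0,0; 1,0,1,1,0,0,2,0; 0,1,0,0,0,0,0,2]

def E8K : Matrix (Fin 8) (Fin 8) ℤ :=
  !![2,2,-2,0,-1,-1,0,-1; 2,14,-4,-6,2,-4,4,-7; -2,-4,4,0,1,2,-1,2; 0,-6,0,4,-2,1,-2,3;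
     -1,2,1,-2,2,0,1,-1; -1,-4,2,1,0,2,-1,2; 0,4,-1,-2,1,-1,2,-2; -1,-7,2,3,-1,2,-2,4]

lemma cv_1_1 {α : Type*} (x : α) (s : Fin 1 → α) : Matrix.vecCons x s 1 = s 0 := rfl
lemma cv_2_1 {α : Type*} (x : α) (s : Fin 2 → α) : Matrix.vecCons x s 1 = s 0 := rfl
lemma cv_2_2 {α : Type*} (x : α) (s : Fin 2 → α) : Matrix.vecCons x s 2 = s 1 := rfl
lemma cv_3_1 {α : Type*} (x : α) (s : Fin 3 → α) : Matrix.vecCons x s 1 = s 0 := rfl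
lemma cv_3_2 {α : Type*} (x : α) (s : Fin 3 → α) : Matrix.vecCons x s 2 = s 1 := rfl
lemma cv_3_3 {α : Type*} (x : α) (s : Fin 3 → α) : Matrix.vecCons x s 3 = s 2 := rfl
lemma cv_4_1 {α : Type*} (x : α) (s : Fin 4 → α) : Matrix.vecCons x s 1 = s 0 := rfl
lemma cv_4_2 {α : Type*} (x : α) (s : Fin 4 → α) : Matrix.vecCons x s 2 = s 1 := rfl
lemma cv_4_3 {α : Type*} (x : α) (s : Fin 4 → α) : Matrix.vecCons x s 3 = s 2 := rfl
lemma cv_4_4 {α : Type*} (x : α) (s : Fin 4 → α) : Matrix.vecCons x s 4 = s 3 := rfl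
lemma cv_5_1 {α : Type*} (x : α) (s : Fin 5 → α) : Matrix.vecCons x s 1 = s 0 := rfl
lemma cv_5_2 {α : Type*} (x : α) (s : Fin 5 → α) : Matrix.vecCons x s 2 = s 1 := rfl
lemma cv_5_3 {α : Type*} (x : α) (s : Fin 5 → α) : Matrix.vecCons x s 3 = s 2 := rfl
lemma cv_5_4 {α : Type*} (x : α) (s : Fin 5 → α) : Matrix.vecCons x s 4 = s 3 := rfl
lemma cv_5_5 {α : Type*} (x : α) (s : Fin 5 → α) : Matrix.vecCons x s 5 = s 4 := rfl
lemma cv_6_1 {α : Type*} (x : α) (s : Fin 6 → α) : Matrix.vecCons x s 1 = s 0 := rfl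
lemma cv_6_2 {α : Type*} (x : α) (s : Fin 6 → α) : Matrix.vecCons x s 2 = s 1 := rfl
lemma cv_6_3 {α : Type*} (x : α) (s : Fin 6 → α) : Matrix.vecCons x s 3 = s 2 := rfl
lemma cv_6_4 {α : Type*} (x : α) (s : Fin 6 → α) : Matrix.vecCons x s 4 = s 3 := rfl
lemma cv_6_5 {α : Type*} (x : α) (s : Fin 6 → α) : Matrix.vecCons x s 5 = s 4 := rfl
lemma cv_6_6 {α : Type*} (x : α) (s : Fin 6 → α) : Matrix.vecCons x s 6 = s 5 := rfl
lemma cv_7_1 {α : Type*} (x : α) (s : Fin 7 → α) : Matrix.vecCons x s 1 = s 0 := rfl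
lemma cv_7_2 {α : Type*} (x : α) (s : Fin 7 → α) : Matrix.vecCons x s 2 = s 1 := rfl
lemma cv_7_3 {α : Type*} (x : α) (s : Fin 7 → α) : Matrix.vecCons x s 3 = s 2 := rfl
lemma cv_7_4 {α : Type*} (x : α) (s : Fin 7 → α) : Matrix.vecCons x s 4 = s 3 := rfl
lemma cv_7_5 {α : Type*} (x : α) (s : Fin 7 → α) : Matrix.vecCons x s 5 = s 4 := rfl
lemma cv_7_6 {α : Type*} (x : α) (s : Fin 7 → α) : Matrix.vecCons x s 6 = s 5 := rfl
lemma cv_7_7 {α : Type*} (x : α) (s : Fin 7 → α) : Matrix.vecCons x s 7 = s 6 := rfl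

def EV : Fin 8 → V :=
![![![(1/2), 0, 0, 0], ![(1/2), 0, 0, 0], ![(1/2), 0, 0, 0], ![(1/2), 0, 0, 0]],
![![0, 0, (1/2), (1/2)], ![0, 0, (1/2), (1/2)], ![0, 0, (1/2), (1/2)], ![0, 0, (1/2), (1/2)]],
![![0, 0, 0, 0], ![(1/2), 0, 0, 0], ![0, 0, (1/2), (1/2)], ![(1/2), 0, (1/2), (1/2)]],
![![(1/2), 0, (1/2), (1/2)], ![(1/2), 0, 0, 0], ![0, 0, 1, 1], ![0, 0, (1/2), (1/2)]],
![![1, 0, 0, 0], ![0, 0, 0, 0], ![0, 0, 0, 0], ![0, 0, 0, 0]],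
![![0, 0, 1, 1], ![0, 0, 0, 0], ![0, 0, 0, 0], ![0, 0, 0, 0]],
![![0, 0, 0, 0], ![1, 0, 0, 0], ![0, 0, 0, 0], ![0, 0, 0, 0]],
![![0, 0, 0, 0], ![0, 0, 1, 1], ![0, 0, 0, 0], ![0, 0, 0, 0]]]

lemma hμ : μ = EV 0 := by
  funext j k
  fin_cases j <;> fin_cases k <;>
    norm_num [μ, a, EV, Fin.ext_iff, show ((0:Fin 4):ℕ) = 0 from rfl, show ((1:Fin 4):ℕ) = 1 from rfl, show ((2:Fin 4):ℕ) = 2 from rfl, show ((3:Fin 4):ℕ) = 3 from rfl, show ((0:Fin 8):ℕ) = 0 from rfl, show ((1:Fin 8):ℕ) = 1 from rfl, show ((2:Fin 8):ℕ) = 2 from rfl, show ((3:Fin 8):ℕ) = 3 from rfl, show ((4:Fin 8):ℕ) = 4 from rfl, show ((5:Fin 8):ℕ) = 5 from rfl, show ((6:Fin 8):ℕ) = 6 from rfl, show ((7:Fin 8):ℕ) = 7 from rfl] <;> decide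

lemma hν : ν = EV 2 := by
  funext j k
  fin_cases j <;> fin_cases k <;>
    norm_num [ν, a, EV, Fin.ext_iff, show ((0:Fin 4):ℕ) = 0 from rfl, show ((1:Fin 4):ℕ) = 1 from rfl, show ((2:Fin 4):ℕ) = 2 from rfl, show ((3:Fin 4):ℕ) = 3 from rfl, show ((0:Fin 8):ℕ) = 0 from rfl, show ((1:Fin 8):ℕ) = 1 from rfl, show ((2:Fin 8):ℕ) = 2 from rfl, show ((3:Fin 8):ℕ) = 3 from rfl, show ((4:Fin 8):ℕ) = 4 from rfl, show ((5:Fin 8):ℕ) = 5 from rfl, show ((6:Fin 8):ℕ) = 6 from rfl, show ((7:Fin 8):ℕ) = 7 from rfl] <;> simp [Matrix.cons_val]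

lemma hgμ : g μ = ![![0, (1/2), 0, 0], ![0, (1/2), 0, 0], ![0, (1/2), 0, 0], ![0, (1/2), 0, 0]] := by
  rw [hμ]; funext j k
  fin_cases j <;> fin_cases k <;> norm_num [g, EV, Matrix.vecHead, Matrix.vecTail] <;> simp

lemma hg2μ : g (g μ) = ![![0, 0, (1/2), 0], ![0, 0, (1/2), 0], ![0, 0, (1/2), 0], ![0, 0, (1/2), 0]] := by
  rw [hgμ]; funext j k
  fin_cases j <;> fin_cases k <;> norm_num [g, Matrix.vecHead, Matrix.vecTail] <;> simp

lemma hg3μ : g (g (g μ)) = ![![0, 0, 0, (1/2)], ![0, 0, 0, (1/2)], ![0, 0, 0, (1/2)], ![0, 0, 0, (1/2)]] := by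
  rw [hg2μ]; funext j k
  fin_cases j <;> fin_cases k <;> norm_num [g, Matrix.vecHead, Matrix.vecTail] <;> simp

lemma hgν : g ν = ![![0, 0, 0, 0], ![0, (1/2), 0, 0], ![(-1/2), (-1/2), (-1/2), 0], ![(-1/2), 0, (-1/2), 0]] := by
  rw [hν]; funext j k
  fin_cases j <;> fin_cases k <;> norm_num [g, EV, Matrix.vecHead, Matrix.vecTail] <;> simp

lemma hg2ν : g (g ν) = ![![0, 0, 0, 0], ![0, 0, (1/2), 0], ![0, (-1/2), (-1/2), (-1/2)], ![0, (-1/2), 0, (-1/2)]] := by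
  rw [hgν]; funext j k
  fin_cases j <;> fin_cases k <;> norm_num [g, Matrix.vecHead, Matrix.vecTail] <;> simp

lemma hg3ν : g (g (g ν)) = ![![0, 0, 0, 0], ![0, 0, 0, (1/2)], ![(1/2), (1/2), 0, 0], ![(1/2), (1/2), 0, (1/2)]] := by
  rw [hg2ν]; funext j k
  fin_cases j <;> fin_cases k <;> norm_num [g, Matrix.vecHead, Matrix.vecTail] <;> simp

lemma hit2 (x : V) : g^[2] x = g (g x) := by
  rw [show (2:ℕ) = 1+1 from rfl, Function.iterate_add_apply, Function.iterate_one]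

lemma hit3 (x : V) : g^[3] x = g (g (g x)) := by
  rw [show (3:ℕ) = 1+2 from rfl, Function.iterate_add_apply, Function.iterate_one, hit2]

lemma he0 : e 0 = EV 0 := hμ
lemma he2 : e 2 = EV 2 := hν
lemma he4 : e 4 = EV 4 := by
  show a 0 0 = EV 4
  funext j k
  fin_cases j <;> fin_cases k <;>
    norm_num [a, EV, Fin.ext_iff, show ((0:Fin 4):ℕ) = 0 from rfl, show ((1:Fin 4):ℕ) = 1 from rfl, show ((2:Fin 4):ℕ) = 2 from rfl, show ((3:Fin 4):ℕ) = 3 from rfl, show ((0:Fin 8):ℕ) = 0 from rfl, show ((1:Fin 8):ℕ) = 1 from rfl, show ((2:Fin 8):ℕ) = 2 from rfl, show ((3:Fin 8):ℕ) = 3 from rfl, show ((4:Fin 8):ℕ) = 4 from rfl, show ((5:Fin 8):ℕ) = 5 from rfl, show ((6:Fin 8):ℕ) = 6 from rfl, show ((7:Fin 8):ℕ) = 7 from rfl] <;> decide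
lemma he5 : e 5 = EV 5 := by
  show a 0 2 + a 0 3 = EV 5
  funext j k
  fin_cases j <;> fin_cases k <;>
    norm_num [a, EV, Fin.ext_iff, show ((0:Fin 4):ℕ) = 0 from rfl, show ((1:Fin 4):ℕ) = 1 from rfl, show ((2:Fin 4):ℕ) = 2 from rfl, show ((3:Fin 4):ℕ) = 3 from rfl, show ((0:Fin 8):ℕ) = 0 from rfl, show ((1:Fin 8):ℕ) = 1 from rfl, show ((2:Fin 8):ℕ) = 2 from rfl, show ((3:Fin 8):ℕ) = 3 from rfl, show ((4:Fin 8):ℕ) = 4 from rfl, show ((5:Fin 8):ℕ) = 5 from rfl, show ((6:Fin 8):ℕ) = 6 from rfl, show ((7:Fin 8):ℕ) = 7 from rfl] <;> decide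
lemma he6 : e 6 = EV 6 := by
  show a 1 0 = EV 6
  funext j k
  fin_cases j <;> fin_cases k <;>
    norm_num [a, EV, Fin.ext_iff, show ((0:Fin 4):ℕ) = 0 from rfl, show ((1:Fin 4):ℕ) = 1 from rfl, show ((2:Fin 4):ℕ) = 2 from rfl, show ((3:Fin 4):ℕ) = 3 from rfl, show ((0:Fin 8):ℕ) = 0 from rfl, show ((1:Fin 8):ℕ) = 1 from rfl, show ((2:Fin 8):ℕ) = 2 from rfl, show ((3:Fin 8):ℕ) = 3 from rfl, show ((4:Fin 8):ℕ) = 4 from rfl, show ((5:Fin 8):ℕ) = 5 from rfl, show ((6:Fin 8):ℕ) = 6 from rfl, show ((7:Fin 8):ℕ) = 7 from rfl] <;> decide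
lemma he7 : e 7 = EV 7 := by
  show a 1 2 + a 1 3 = EV 7
  funext j k
  fin_cases j <;> fin_cases k <;>
    norm_num [a, EV, Fin.ext_iff, show ((0:Fin 4):ℕ) = 0 from rfl, show ((1:Fin 4):ℕ) = 1 from rfl, show ((2:Fin 4):ℕ) = 2 from rfl, show ((3:Fin 4):ℕ) = 3 from rfl, show ((0:Fin 8):ℕ) = 0 from rfl, show ((1:Fin 8):ℕ) = 1 from rfl, show ((2:Fin 8):ℕ) = 2 from rfl, show ((3:Fin 8):ℕ) = 3 from rfl, show ((4:Fin 8):ℕ) = 4 from rfl, show ((5:Fin 8):ℕ) = 5 from rfl, show ((6:Fin 8):ℕ) = 6 from rfl, show ((7:Fin 8):ℕ) = 7 from rfl] <;> decide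
lemma he1 : e 1 = EV 1 := by
  show g^[2] μ + g^[3] μ = EV 1
  rw [hit2, hit3, hg3μ, hg2μ]
  funext j k
  fin_cases j <;> fin_cases k <;> norm_num [EV, Matrix.vecHead, Matrix.vecTail] <;> simp
lemma he3 : e 3 = EV 3 := by
  show μ + g^[2] μ + g^[3] μ - g^[2] ν - g^[3] ν = EV 3
  rw [hit2 μ, hit3 μ, hit2 ν, hit3 ν, hg3μ, hg2μ, hg3ν, hg2ν, hμ]
  funext j k
  fin_cases j <;> fin_cases k <;> norm_num [EV, Matrix.vecHead, Matrix.vecTail] <;> simp <;> norm_num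

lemma hEV : ∀ i, e i = EV i := by
  intro i
  fin_cases i
  exacts [he0, he1, he2, he3, he4, he5, he6, he7]

set_option maxHeartbeats 2000000 in
set_option maxRecDepth 100000 in
lemma Bval : ∀ i j, B (e i) (e j) = -2 * ((E8M i j : ℤ) : ℚ) := by
  intro i j
  rw [hEV i, hEV j]
  fin_cases i <;> fin_cases j <;>
    simp [B, EV, E8M, CartanA4, Fin.sum_univ_four] <;> norm_num

lemma quadpos {R : Type*} [CommRing R] [LinearOrder R] [IsStrictOrderedRing R] (x : Fin 8 → R) (i : Fin 8)
    (hi : x i ≠ 0) :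
    0 < 10*(2*x 0 + x 2 + x 3 + x 4 + x 6)^2 + 10*(2*x 1 + x 2 + 2*x 3 + x 5 + x 7)^2
      + 5*(2*x 2 + x 3 - x 4 - x 5 + x 6 - x 7)^2 + (5*x 3 + 3*x 4 + x 5 + x 6 - 3*x 7)^2
      + (4*x 4 - 2*x 5 - 2*x 6 + x 7)^2 + 5*(2*x 5 - x 7)^2 + 5*(2*x 6 + x 7)^2
      + 5*(x 7)^2 := by
  by_contra hc
  push_neg at hc
  have n0 := sq_nonneg (2*x 0 + x 2 + x 3 + x 4 + x 6)
  have n1 := sq_nonneg (2*x 1 + x 2 + 2*x 3 + x 5 + x 7)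
  have n2 := sq_nonneg (2*x 2 + x 3 - x 4 - x 5 + x 6 - x 7)
  have n3 := sq_nonneg (5*x 3 + 3*x 4 + x 5 + x 6 - 3*x 7)
  have n4 := sq_nonneg (4*x 4 - 2*x 5 - 2*x 6 + x 7)
  have n5 := sq_nonneg (2*x 5 - x 7)
  have n6 := sq_nonneg (2*x 6 + x 7)
  have n7 := sq_nonneg (x 7)
  have z7 : x 7 = 0 :=
    pow_eq_zero_iff (n := 2) (by norm_num) |>.mp (le_antisymm (by linarith) n7)
  have z6 : x 6 = 0 := by
    have := pow_eq_zero_iff (n := 2) (by norm_num) |>.mp (le_antisymm (by linarith) n6)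
    linarith
  have z5 : x 5 = 0 := by
    have := pow_eq_zero_iff (n := 2) (by norm_num) |>.mp (le_antisymm (by linarith) n5)
    linarith
  have z4 : x 4 = 0 := by
    have := pow_eq_zero_iff (n := 2) (by norm_num) |>.mp (le_antisymm (by linarith) n4)
    linarith
  have z3 : x 3 = 0 := by
    have := pow_eq_zero_iff (n := 2) (by norm_num) |>.mp (le_antisymm (by linarith) n3)
    linarith
  have z2 : x 2 = 0 := by
    have := pow_eq_zero_iff (n := 2) (by norm_num) |>.mp (le_antisymm (by linarith) n2)
    linarith
  have z1 : x 1 = 0 := by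
    have := pow_eq_zero_iff (n := 2) (by norm_num) |>.mp (le_antisymm (by linarith) n1)
    linarith
  have z0 : x 0 = 0 := by
    have := pow_eq_zero_iff (n := 2) (by norm_num) |>.mp (le_antisymm (by linarith) n0)
    linarith
  fin_cases i
  exacts [hi z0, hi z1, hi z2, hi z3, hi z4, hi z5, hi z6, hi z7]

lemma E8M_posdef : E8M.PosDef := by
  refine Matrix.posDef_iff_dotProduct_mulVec.mpr ⟨by decide, fun x hx => ?_⟩
  obtain ⟨i, hi⟩ := Function.ne_iff.mp hx
  have key : 20 * dotProduct (star x) (E8M.mulVec x) =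
      10*(2*x 0 + x 2 + x 3 + x 4 + x 6)^2 + 10*(2*x 1 + x 2 + 2*x 3 + x 5 + x 7)^2
      + 5*(2*x 2 + x 3 - x 4 - x 5 + x 6 - x 7)^2 + (5*x 3 + 3*x 4 + x 5 + x 6 - 3*x 7)^2
      + (4*x 4 - 2*x 5 - 2*x 6 + x 7)^2 + 5*(2*x 5 - x 7)^2 + 5*(2*x 6 + x 7)^2
      + 5*(x 7)^2 := by
    simp [dotProduct, Matrix.mulVec, Fin.sum_univ_eight, E8M,
      Matrix.vecHead, Matrix.vecTail, cv_1_1, cv_2_1, cv_2_2, cv_3_1, cv_3_2, cv_3_3, cv_4_1, cv_4_2, cv_4_3, cv_4_4, cv_5_1, cv_5_2, cv_5_3, cv_5_4, cv_5_5, cv_6_1, cv_6_2, cv_6_3, cv_6_4, cv_6_5, cv_6_6, cv_7_1, cv_7_2, cv_7_3, cv_7_4, cv_7_5, cv_7_6, cv_7_7]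
    ring
  have := quadpos x i hi
  linarith

lemma E8M_posdef_real : (E8M.map ((Int.cast : ℤ → ℝ))).PosDef := by
  have hsym : E8M.IsSymm := by decide
  rw [Matrix.posDef_iff_dotProduct_mulVec]
  constructor
  · ext i j
    simp only [Matrix.conjTranspose_apply, Matrix.map_apply, star_trivial]
    exact_mod_cast congrArg (Int.cast : ℤ → ℝ) (congrFun (congrFun hsym i) j)
  intro x hx
  obtain ⟨i, hi⟩ := Function.ne_iff.mp hx
  have key : 20 * dotProduct (star x) ((E8M.map ((Int.cast : ℤ → ℝ))).mulVec x) =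
      10*(2*x 0 + x 2 + x 3 + x 4 + x 6)^2 + 10*(2*x 1 + x 2 + 2*x 3 + x 5 + x 7)^2
      + 5*(2*x 2 + x 3 - x 4 - x 5 + x 6 - x 7)^2 + (5*x 3 + 3*x 4 + x 5 + x 6 - 3*x 7)^2
      + (4*x 4 - 2*x 5 - 2*x 6 + x 7)^2 + 5*(2*x 5 - x 7)^2 + 5*(2*x 6 + x 7)^2
      + 5*(x 7)^2 := by
    norm_num [dotProduct, Matrix.mulVec, Matrix.map_apply, Fin.sum_univ_eight, E8M,
      Matrix.vecHead, Matrix.vecTail, cv_1_1, cv_2_1, cv_2_2, cv_3_1, cv_3_2, cv_3_3, cv_4_1, cv_4_2, cv_4_3, cv_4_4, cv_5_1, cv_5_2, cv_5_3, cv_5_4, cv_5_5, cv_6_1, cv_6_2, cv_6_3, cv_6_4, cv_6_5, cv_6_6, cv_7_1, cv_7_2, cv_7_3, cv_7_4, cv_7_5, cv_7_6, cv_7_7]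
    ring
  have := quadpos x i hi
  linarith

lemma detaux2 {n : Type*} [Fintype n] [DecidableEq n] (A B : Matrix n n ℤ) (h : A * B = 1) :
    A.det * B.det = 1 := by
  rw [← Matrix.det_mul, h, Matrix.det_one]

lemma mapaux {n : Type*} [Fintype n] [DecidableEq n] (A : Matrix n n ℤ) :
    ((A.det : ℤ) : ℝ) = (A.map ((Int.cast : ℤ → ℝ))).det := by
  have h := (Int.castRingHom ℝ).map_det A
  simpa [RingHom.mapMatrix_apply] using h

lemma detposaux {n : Type*} [Fintype n] [DecidableEq n] (A : Matrix n n ℤ)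
    (h : (A.map ((Int.cast : ℤ → ℝ))).PosDef) : 0 < A.det := by
  have hd := h.det_pos
  rw [← mapaux A] at hd
  exact_mod_cast hd

lemma E8M_det : E8M.det = 1 := by
  have hMK : E8M * E8K = 1 := by decide
  have hdet1 := detaux2 E8M E8K hMK
  have hpos' : 0 < E8M.det := detposaux E8M E8M_posdef_real
  rcases Int.isUnit_iff.mp (IsUnit.of_mul_eq_one _ hdet1) with h | h <;> omega

lemma memN (j i : Fin 4) : a j i ∈ N := by
  refine (AddSubgroup.mem_pi Set.univ).mpr fun j' _ => ?_
  refine (AddSubgroup.mem_pi Set.univ).mpr fun i' _ => ?_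
  exact ⟨if j' = j ∧ i' = i then 1 else 0, by by_cases h : j' = j ∧ i' = i <;> simp [a, h]⟩

lemma memL : ∀ i : Fin 8, e i ∈ L := by
  have hgen : ∀ k : Fin 4, (g^[(k:ℕ)] μ ∈ L ∧ g^[(k:ℕ)] ν ∈ L) := fun k =>
    ⟨AddSubgroup.mem_sup_right (AddSubgroup.subset_closure ⟨k, Or.inl rfl⟩),
     AddSubgroup.mem_sup_right (AddSubgroup.subset_closure ⟨k, Or.inr rfl⟩)⟩
  intro i
  fin_cases i
  · exact (hgen 0).1
  · exact add_mem (hgen 2).1 (hgen 3).1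
  · exact (hgen 0).2
  · exact sub_mem (sub_mem (add_mem (add_mem (hgen 0).1 (hgen 2).1) (hgen 3).1)
      (hgen 2).2) (hgen 3).2
  · exact AddSubgroup.mem_sup_left (memN 0 0)
  · exact AddSubgroup.mem_sup_left (add_mem (memN 0 2) (memN 0 3))
  · exact AddSubgroup.mem_sup_left (memN 1 0)
  · exact AddSubgroup.mem_sup_left (add_mem (memN 1 2) (memN 1 3))


/-- The vectors `e₁, …, e₈` span a copy of `E₈(-2)` inside `L`: the Gram matrix has even
integer entries, and minus half of it is a symmetric positive definite even integer matrix of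
determinant 1 (i.e. the Gram matrix of `E₈`). -/
theorem stmt8 :
    (∀ i : Fin 8, e i ∈ L) ∧
    (∀ i j : Fin 8, ∃ n : ℤ, B (e i) (e j) = 2 * (n : ℚ)) ∧
    ∃ M' : Matrix (Fin 8) (Fin 8) ℤ,
      (∀ i j, (M' i j : ℚ) = -(1/2) * B (e i) (e j)) ∧
      M'.IsSymm ∧ M'.PosDef ∧ (∀ i, Even (M' i i)) ∧ M'.det = 1 := by
  refine ⟨memL, fun i j => ⟨-(E8M i j), by rw [Bval i j]; push_cast; ring⟩, E8M,
    fun i j => by rw [Bval i j]; push_cast; ring,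
    by decide, E8M_posdef, by decide, E8M_det⟩
  end
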